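/- For all natural numbers m, n, p with p ≤ n ≤ m, the following summation identity holds in K: ∑_{k=0}^{p} ([n−p+k]! · [m−k]! / ([n−p]! · [m]!))² · v^{2(k−p)(m−p−k+1) + k² − mk + (p−k)² − n(p−k)} · [m choose k] · [n choose p−k] = v^{p(2p − 2m − 1)} · [n]! · [m+n−p+1]! · [m−p]! / ([m]! · [p]! · [m+n−2p+1]! · [n−p]!). -/

import Mathlib

open PowerSeries Finset

noncomputable section

/-- The base field `K = ℚ(v)`. -/
abbrev K : Type := RatFunc ℚ

/-- The indeterminate `v` of `K = ℚ(v)`. -/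
noncomputable def v : K := RatFunc.X

/-- The quantum integer `[m] = (v^m - v^{-m})/(v - v⁻¹)`. -/
noncomputable def qint (m : ℤ) : K := (v ^ m - v ^ (-m)) / (v - v⁻¹)

/-- The quantum factorial `[n]! = [n][n-1]⋯[1]`. -/
noncomputable def qfact (n : ℕ) : K := ∏ i ∈ Finset.range n, qint (i + 1)

/-- The quantum binomial coefficient `[m choose n]`. -/
noncomputable def qbinom (m n : ℤ) : K :=
  if 0 ≤ n ∧ n ≤ m then qfact m.toNat / (qfact n.toNat * qfact (m - n).toNat) else 0

/-- The ring `R = K[[X]]`. -/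
abbrev R : Type := PowerSeries K

/-- `T = 1 + X`, a unit of `R`. -/
noncomputable def T : R := 1 + PowerSeries.X

/-- `T⁻¹`, the inverse of the unit `T` in `R`. -/
noncomputable def Tinv : R := Ring.inverse T

/-- `[T;r] = (v^r T - v^{-r} T⁻¹)/(v - v⁻¹)`. -/
noncomputable def bT (r : ℤ) : R :=
  PowerSeries.C (R := K) ((v - v⁻¹)⁻¹) *
    (PowerSeries.C (R := K) (v ^ r) * T - PowerSeries.C (R := K) (v ^ (-r)) * Tinv)

/-- `[T⁻¹;r] = (v^r T⁻¹ - v^{-r} T)/(v - v⁻¹)`. -/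
noncomputable def bTinv (r : ℤ) : R :=
  PowerSeries.C (R := K) ((v - v⁻¹)⁻¹) *
    (PowerSeries.C (R := K) (v ^ r) * Tinv - PowerSeries.C (R := K) (v ^ (-r)) * T)

/-- `[T;r]_{(j)} = [T;r][T;r-1]⋯[T;r-j+1]`. -/
noncomputable def bTdesc (r : ℤ) (j : ℕ) : R := ∏ i ∈ Finset.range j, bT (r - i)

/-- `[T;r]^{(j)} = [T;r+1][T;r+2]⋯[T;r+j]`. -/
noncomputable def bTasc (r : ℤ) (j : ℕ) : R := ∏ i ∈ Finset.range j, bT (r + 1 + i)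

/-- `[T⁻¹;r]_{(j)} = [T⁻¹;r][T⁻¹;r-1]⋯[T⁻¹;r-j+1]`. -/
noncomputable def bTinvDesc (r : ℤ) (j : ℕ) : R := ∏ i ∈ Finset.range j, bTinv (r - i)

/-!
With `a = n - p` and `b = m - p`, the `k`-th summand equals the constant
`v^(p(2p-2m-1)) [n]! [m-p]! / ([n-p]! [m]! [p]!)` times the `k`-th term of the
`v`-Chu–Vandermonde sum
`∑ₖ v^(k(a+b+2) - p(a+1)) [p choose k] ([a+1]⋯[a+k]) ([b+1]⋯[b+p-k]) = [a+b+2]⋯[a+b+p+1]`,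
and the right-hand side is that constant times `[m+n-p+1]! / [m+n-2p+1]!`. The Vandermonde identity
follows by induction on `p` from the `v`-Pascal rule and `[x+y] = v^(-y) [x] + v^x [y]`.
-/

lemma v_ne_zero : v ≠ 0 := RatFunc.X_ne_zero

lemma v_pow_ne_one {k : ℕ} (hk : k ≠ 0) : v ^ k ≠ 1 := by
  intro h
  have hX : v = algebraMap (Polynomial ℚ) K Polynomial.X := rfl
  rw [hX, ← map_pow, ← map_one (algebraMap (Polynomial ℚ) K)] at h
  have hdeg := congrArg Polynomial.natDegree (RatFunc.algebraMap_injective ℚ h)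
  simp only [Polynomial.natDegree_X_pow, Polynomial.natDegree_one] at hdeg
  exact hk hdeg

lemma v_sub_v_inv_ne_zero : v - v⁻¹ ≠ 0 := by
  intro h
  have hsq : v * v⁻¹ = 1 := mul_inv_cancel₀ v_ne_zero
  rw [← sub_eq_zero.mp h, ← pow_two] at hsq
  exact v_pow_ne_one two_ne_zero hsq

lemma qint_add (x y : ℤ) : qint (x + y) = v ^ (-y) * qint x + v ^ x * qint y := by
  simp only [qint, mul_div_assoc', ← add_div, mul_sub, ← zpow_add₀ v_ne_zero]
  ring_nf

lemma qint_zero : qint 0 = 0 := by simp [qint]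

lemma qint_natCast_ne_zero {n : ℕ} (hn : n ≠ 0) : qint n ≠ 0 := by
  refine div_ne_zero (fun h => ?_) v_sub_v_inv_ne_zero
  have hsq : v ^ (2 * n) = 1 := by
    have h' := congrArg (· * v ^ (n : ℤ)) (sub_eq_zero.mp h)
    simp only [← zpow_add₀ v_ne_zero, neg_add_cancel, zpow_zero] at h'
    rwa [← zpow_natCast, Nat.cast_mul, Nat.cast_two, two_mul]
  exact v_pow_ne_one (by omega) hsq

lemma qfact_succ (n : ℕ) : qfact (n + 1) = qfact n * qint (n + 1) := prod_range_succ _ _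

lemma qfact_ne_zero (n : ℕ) : qfact n ≠ 0 :=
  prod_ne_zero_iff.mpr fun i _ => mod_cast qint_natCast_ne_zero i.succ_ne_zero

/-- The Gaussian binomial coefficient through the `v`-Pascal rule, which (unlike `qbinom`) needs
no side conditions in inductions. -/
def qchoose : ℕ → ℕ → K
  | _, 0 => 1
  | 0, _ + 1 => 0
  | n + 1, k + 1 => v ^ (-(k + 1 : ℤ)) * qchoose n (k + 1) + v ^ ((n : ℤ) - k) * qchoose n k

lemma qchoose_zero_right (n : ℕ) : qchoose n 0 = 1 := by cases n <;> rfl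

lemma qchoose_succ_succ (n k : ℕ) :
    qchoose (n + 1) (k + 1) =
      v ^ (-(k + 1 : ℤ)) * qchoose n (k + 1) + v ^ ((n : ℤ) - k) * qchoose n k :=
  rfl

lemma qchoose_eq_zero_of_lt : ∀ {n k : ℕ}, n < k → qchoose n k = 0
  | 0, _ + 1, _ => rfl
  | n + 1, k + 1, h => by
    rw [qchoose_succ_succ, qchoose_eq_zero_of_lt (by omega), qchoose_eq_zero_of_lt (by omega)]
    ring

lemma qchoose_mul_qfact_mul_qfact :
    ∀ {n k : ℕ}, k ≤ n → qchoose n k * (qfact k * qfact (n - k)) = qfact n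
  | n, 0, _ => by simp [qchoose_zero_right, qfact]
  | n + 1, k + 1, hk => by
    have hk : k ≤ n := by omega
    have ih := qchoose_mul_qfact_mul_qfact hk
    -- also valid for `k = n`, where both sides vanish
    have ih' :
        qchoose n (k + 1) * (qfact (k + 1) * qfact (n - k)) = qfact n * qint ((n : ℤ) - k) := by
      rcases hk.lt_or_eq with hlt | rfl
      · have hcast : ((n - (k + 1) : ℕ) : ℤ) + 1 = n - k := by omega
        rw [show n - k = n - (k + 1) + 1 by omega, qfact_succ (n - (k + 1)), hcast,
          ← qchoose_mul_qfact_mul_qfact hlt]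
        ring
      · simp [qchoose_eq_zero_of_lt, qint_zero]
    have hpascal := qint_add ((n : ℤ) - k) (k + 1)
    rw [show (n : ℤ) - k + (k + 1) = n + 1 by ring] at hpascal
    rw [qfact_succ k] at ih'
    rw [qchoose_succ_succ, Nat.add_sub_add_right, qfact_succ n, qfact_succ k, hpascal]
    linear_combination v ^ (-(k + 1 : ℤ)) * ih' + v ^ ((n : ℤ) - k) * qint (k + 1) * ih

lemma qchoose_eq_div {n k : ℕ} (hk : k ≤ n) :
    qchoose n k = qfact n / (qfact k * qfact (n - k)) := by
  rw [eq_div_iff (mul_ne_zero (qfact_ne_zero k) (qfact_ne_zero (n - k)))]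
  exact qchoose_mul_qfact_mul_qfact hk

lemma qbinom_natCast {n k : ℕ} (hk : k ≤ n) : qbinom n k = qchoose n k := by
  rw [qchoose_eq_div hk, qbinom, if_pos ⟨k.cast_nonneg, mod_cast hk⟩, ← Nat.cast_sub hk]
  simp only [Int.toNat_natCast]

lemma sum_range_succ_qchoose_mul (p : ℕ) (F : ℕ → K) :
    ∑ k ∈ range (p + 2), qchoose (p + 1) k * F k =
      ∑ k ∈ range (p + 1),
        qchoose p k * (v ^ (-(k : ℤ)) * F k + v ^ ((p : ℤ) - k) * F (k + 1)) := by
  have hshift : ∑ k ∈ range (p + 1), qchoose p k * (v ^ (-(k : ℤ)) * F k) =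
      F 0 + ∑ k ∈ range (p + 1), qchoose p (k + 1) * (v ^ (-(k + 1 : ℤ)) * F (k + 1)) := by
    conv_rhs => rw [sum_range_succ, qchoose_eq_zero_of_lt p.lt_succ_self]
    rw [sum_range_succ']
    simp [qchoose_zero_right, add_comm]
  simp only [mul_add, sum_add_distrib, hshift, sum_range_succ' _ (p + 1), qchoose_succ_succ,
    qchoose_zero_right]
  rw [one_mul, add_comm, add_assoc, ← sum_add_distrib]
  exact congrArg _ (sum_congr rfl fun k _ => by ring)

def qrising (a : ℤ) (k : ℕ) : K := ∏ i ∈ range k, qint (a + 1 + i)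

lemma qrising_succ (a : ℤ) (k : ℕ) : qrising a (k + 1) = qrising a k * qint (a + 1 + k) :=
  prod_range_succ _ _

lemma qrising_natCast (c k : ℕ) : qrising c k = qfact (c + k) / qfact c := by
  rw [eq_div_iff (qfact_ne_zero c)]
  induction k with
  | zero => simp [qrising]
  | succ k ih =>
    rw [← add_assoc, qfact_succ, ← ih, qrising_succ]
    push_cast
    ring_nf

theorem sum_qchoose_mul_qrising (a b : ℤ) (p : ℕ) :
    ∑ k ∈ range (p + 1),
        qchoose p k * (v ^ (k * (a + b + 2) - p * (a + 1)) * qrising a k * qrising b (p - k)) =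
      qrising (a + b + 1) p := by
  induction p with
  | zero => simp [qchoose_zero_right, qrising]
  | succ p ih =>
    rw [sum_range_succ_qchoose_mul, qrising_succ, ← ih, sum_mul]
    refine sum_congr rfl fun k hk => ?_
    have hk : k ≤ p := mem_range_succ_iff.mp hk
    have hpascal := qint_add (b + 1 + (p - k)) (a + 1 + k)
    rw [show b + 1 + (p - k) + (a + 1 + k) = a + b + 1 + 1 + p by ring] at hpascal
    rw [show p + 1 - k = p - k + 1 by omega, Nat.add_sub_add_right, qrising_succ, qrising_succ,
      Nat.cast_sub hk, hpascal]
    push_cast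
    have e1 : v ^ (-(k : ℤ)) * v ^ (k * (a + b + 2) - (p + 1) * (a + 1)) =
        v ^ (k * (a + b + 2) - p * (a + 1)) * v ^ (-(a + 1 + k)) := by
      rw [← zpow_add₀ v_ne_zero, ← zpow_add₀ v_ne_zero]
      congr 1; ring
    have e2 : v ^ ((p : ℤ) - k) * v ^ ((k + 1) * (a + b + 2) - (p + 1) * (a + 1)) =
        v ^ (k * (a + b + 2) - p * (a + 1)) * v ^ (b + 1 + (p - k)) := by
      rw [← zpow_add₀ v_ne_zero, ← zpow_add₀ v_ne_zero]
      congr 1; ring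
    linear_combination qchoose p k * qrising a k * qrising b (p - k) *
      (qint (b + 1 + (p - k)) * e1 + qint (a + 1 + k) * e2)

lemma summand_eq_vandermonde_term {m n p k : ℕ} (hpn : p ≤ n) (hpm : p ≤ m) (hk : k ≤ p) :
    ((qfact (n - p + k) * qfact (m - k)) / (qfact (n - p) * qfact m)) ^ 2 *
        v ^ (2 * ((k : ℤ) - p) * ((m : ℤ) - p - k + 1) + (k : ℤ) ^ 2 - (m : ℤ) * k +
          ((p : ℤ) - k) ^ 2 - (n : ℤ) * ((p : ℤ) - k)) *
        qbinom m k * qbinom n ((p : ℤ) - k) =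
      v ^ ((p : ℤ) * (2 * (p : ℤ) - 2 * m - 1)) * qfact n * qfact (m - p) /
          (qfact (n - p) * qfact m * qfact p) *
        (qchoose p k *
          (v ^ (k * (((n - p : ℕ) : ℤ) + (m - p : ℕ) + 2) - p * (((n - p : ℕ) : ℤ) + 1)) *
          qrising (n - p : ℕ) k * qrising (m - p : ℕ) (p - k))) := by
  have hexp : 2 * ((k : ℤ) - p) * ((m : ℤ) - p - k + 1) + (k : ℤ) ^ 2 - (m : ℤ) * k +
      ((p : ℤ) - k) ^ 2 - (n : ℤ) * ((p : ℤ) - k) =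
        (p : ℤ) * (2 * (p : ℤ) - 2 * m - 1) +
          (k * (((n - p : ℕ) : ℤ) + (m - p : ℕ) + 2) - p * (((n - p : ℕ) : ℤ) + 1)) := by
    push_cast [hpn, hpm]
    ring
  rw [hexp, zpow_add₀ v_ne_zero, qbinom_natCast (hk.trans hpm), qchoose_eq_div (hk.trans hpm),
    ← Nat.cast_sub hk, qbinom_natCast ((Nat.sub_le p k).trans hpn),
    qchoose_eq_div ((Nat.sub_le p k).trans hpn),
    qchoose_eq_div hk, qrising_natCast, qrising_natCast, show n - (p - k) = n - p + k by omega,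
    show m - p + (p - k) = m - k by omega]
  field_simp [qfact_ne_zero]

/-- norm computation for the Clebsch-Gordan highest weight vectors. -/
theorem stmt7 (m n p : ℕ) (hpn : p ≤ n) (hnm : n ≤ m) :
    ∑ k ∈ Finset.range (p + 1),
        ((qfact (n - p + k) * qfact (m - k)) / (qfact (n - p) * qfact m)) ^ 2 *
          v ^ (2 * ((k : ℤ) - p) * ((m : ℤ) - p - k + 1) + (k : ℤ) ^ 2 - (m : ℤ) * k +
                ((p : ℤ) - k) ^ 2 - (n : ℤ) * ((p : ℤ) - k)) *
          qbinom m k * qbinom n ((p : ℤ) - k) =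
      v ^ ((p : ℤ) * (2 * (p : ℤ) - 2 * m - 1)) *
        (qfact n * qfact (m + n - p + 1) * qfact (m - p)) /
        (qfact m * qfact p * qfact (m + n - 2 * p + 1) * qfact (n - p)) := by
  have hpm := hpn.trans hnm
  have hrising : qrising (((n - p : ℕ) : ℤ) + (m - p : ℕ) + 1) p =
      qfact (m + n - p + 1) / qfact (m + n - 2 * p + 1) := by
    rw [show ((n - p : ℕ) : ℤ) + (m - p : ℕ) + 1 = (m + n - 2 * p + 1 : ℕ) by omega,
      qrising_natCast, show m + n - 2 * p + 1 + p = m + n - p + 1 by omega]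
  rw [sum_congr rfl fun k hk => summand_eq_vandermonde_term hpn hpm (mem_range_succ_iff.mp hk),
    ← mul_sum, sum_qchoose_mul_qrising, hrising]
  field_simp [qfact_ne_zero]
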